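/- If ρ_eff : [0, r_s] → ℝ is continuous and monotonically non-increasing, and M(r) = ∫₀^r 4πξ²ρ_eff(ξ) dξ, then for all r ∈ [0, r_s], M(r) ≥ (r³/r_s³)·M(r_s). -/

import Mathlib

/-!
Let `c = ρ_eff(r)`. Monotonicity gives `ρ_eff ≥ c` on `[0, r]` and `ρ_eff ≤ c` on `[r, r_s]`, so
`M(r) ≥ c · 4πr³/3` and `M(r_s) - M(r) ≤ c · 4π(r_s³ - r³)/3`. Eliminating `c` shows that the mean
density `M(r) / (4πr³/3)` is at least `M(r_s) / (4πr_s³/3)`. The argument works for any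
nonnegative continuous weight in place of `4πξ²`.
-/

open Real intervalIntegral Set

section AntitoneWeightedIntegral

variable {w ρ : ℝ → ℝ} {a b c : ℝ}

lemma intervalIntegrable_mul_of_antitoneOn (hab : a ≤ b) (hw : ContinuousOn w (Icc a b))
    (hρ : AntitoneOn ρ (Icc a b)) :
    IntervalIntegrable (fun x => w x * ρ x) MeasureTheory.volume a b := by
  rw [← uIcc_of_le hab] at hw hρ
  exact hρ.intervalIntegrable.continuousOn_mul hw

lemma mul_integral_le_integral_mul_of_antitoneOn (hab : a ≤ b) (hw : ContinuousOn w (Icc a b))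
    (hw0 : ∀ x ∈ Icc a b, 0 ≤ w x) (hρ : AntitoneOn ρ (Icc a b)) :
    ρ b * ∫ x in a..b, w x ≤ ∫ x in a..b, w x * ρ x := by
  rw [← integral_const_mul]
  refine integral_mono_on hab ?_ (intervalIntegrable_mul_of_antitoneOn hab hw hρ) fun x hx => ?_
  · exact (hw.intervalIntegrable_of_Icc hab).const_mul _
  · rw [mul_comm]
    exact mul_le_mul_of_nonneg_left (hρ hx (right_mem_Icc.2 hab) hx.2) (hw0 x hx)

lemma integral_mul_le_mul_integral_of_antitoneOn (hab : a ≤ b) (hw : ContinuousOn w (Icc a b))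
    (hw0 : ∀ x ∈ Icc a b, 0 ≤ w x) (hρ : AntitoneOn ρ (Icc a b)) :
    ∫ x in a..b, w x * ρ x ≤ ρ a * ∫ x in a..b, w x := by
  rw [← integral_const_mul]
  refine integral_mono_on hab (intervalIntegrable_mul_of_antitoneOn hab hw hρ) ?_ fun x hx => ?_
  · exact (hw.intervalIntegrable_of_Icc hab).const_mul _
  · rw [mul_comm (ρ a)]
    exact mul_le_mul_of_nonneg_left (hρ (left_mem_Icc.2 hab) hx hx.1) (hw0 x hx)

/-- The `w`-weighted mean of an antitone `ρ` over `[a, b]` dominates its mean over `[a, c]`,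
in cross-multiplied form. -/
lemma integral_mul_integral_le_of_antitoneOn (hab : a ≤ b) (hbc : b ≤ c)
    (hw : ContinuousOn w (Icc a c)) (hw0 : ∀ x ∈ Icc a c, 0 ≤ w x)
    (hρ : AntitoneOn ρ (Icc a c)) :
    (∫ x in a..b, w x) * ∫ x in a..c, w x * ρ x ≤
      (∫ x in a..c, w x) * ∫ x in a..b, w x * ρ x := by
  have hab_sub : Icc a b ⊆ Icc a c := Icc_subset_Icc_right hbc
  have hbc_sub : Icc b c ⊆ Icc a c := Icc_subset_Icc_left hab
  have hlower := mul_integral_le_integral_mul_of_antitoneOn hab (hw.mono hab_sub)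
    (fun x hx => hw0 x (hab_sub hx)) (hρ.mono hab_sub)
  have hupper := integral_mul_le_mul_integral_of_antitoneOn hbc (hw.mono hbc_sub)
    (fun x hx => hw0 x (hbc_sub hx)) (hρ.mono hbc_sub)
  have hW₁ : 0 ≤ ∫ x in a..b, w x := integral_nonneg hab fun x hx => hw0 x (hab_sub hx)
  have hW₂ : 0 ≤ ∫ x in b..c, w x := integral_nonneg hbc fun x hx => hw0 x (hbc_sub hx)
  rw [← integral_add_adjacent_intervals ((hw.mono hab_sub).intervalIntegrable_of_Icc hab)
      ((hw.mono hbc_sub).intervalIntegrable_of_Icc hbc),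
    ← integral_add_adjacent_intervals
      (intervalIntegrable_mul_of_antitoneOn hab (hw.mono hab_sub) (hρ.mono hab_sub))
      (intervalIntegrable_mul_of_antitoneOn hbc (hw.mono hbc_sub) (hρ.mono hbc_sub))]
  nlinarith [mul_le_mul_of_nonneg_left hupper hW₁, mul_le_mul_of_nonneg_left hlower hW₂]

end AntitoneWeightedIntegral

lemma integral_four_pi_mul_sq (r : ℝ) : ∫ ξ in (0:ℝ)..r, 4 * π * ξ ^ 2 = 4 * π * r ^ 3 / 3 := by
  rw [integral_const_mul, integral_pow]
  ring

theorem buchdahl_mass_bound_general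
    (rs : ℝ) (hrs : 0 < rs)
    (ρeff : ℝ → ℝ)
    (hmono : AntitoneOn ρeff (Set.Icc 0 rs))
    (M : ℝ → ℝ)
    (hM : ∀ r, M r = ∫ ξ in (0:ℝ)..r, 4 * Real.pi * ξ^2 * ρeff ξ) :
    ∀ r ∈ Set.Icc (0:ℝ) rs, M r ≥ (r^3 / rs^3) * M rs := by
  rintro r ⟨hr0, hrrs⟩
  have hmean := integral_mul_integral_le_of_antitoneOn (w := fun ξ => 4 * π * ξ ^ 2) hr0 hrrs
    (by fun_prop) (fun ξ _ => by positivity) hmono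
  simp only [integral_four_pi_mul_sq, ← hM] at hmean
  rw [ge_iff_le, div_mul_eq_mul_div, div_le_iff₀ (by positivity)]
  nlinarith [pi_pos]

theorem buchdahl_mass_bound
    (rs : ℝ) (hrs : 0 < rs)
    (ρeff : ℝ → ℝ)
    (hcont : ContinuousOn ρeff (Set.Icc 0 rs))
    (hmono : AntitoneOn ρeff (Set.Icc 0 rs))
    (M : ℝ → ℝ)
    (hM : ∀ r, M r = ∫ ξ in (0:ℝ)..r, 4 * Real.pi * ξ^2 * ρeff ξ) :
    ∀ r ∈ Set.Icc (0:ℝ) rs, M r ≥ (r^3 / rs^3) * M rs :=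
  buchdahl_mass_bound_general rs hrs ρeff hmono M hM
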